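/- Let n ≥ 1, let C, c > 0, and for λ > 0 define the kernel bound k_λ(x,t,y,s) = 1_{(0,∞)}(t-s) · C λ^{-2} (t-s)^{-n/2} e^{-(t-s)/λ²} e^{-c|x-y|²/(t-s)} on ℝ^n × ℝ × ℝ^n × ℝ. Then the m-fold convolution (in the variables (x,t)) of k_λ with itself satisfies the bound k_λ^{*m}(x,t,y,s) ≤ C' 1_{(0,∞)}(t-s) λ^{-2m} (t-s)^{-n/2 + m - 1} e^{-(t-s)/λ²} e^{-c'|x-y|²/(t-s)}, where C', c' > 0 depend only on n, m, C, c. -/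

import Mathlib

open MeasureTheory Real

/-- The Gaussian-type kernel bound `k_λ(x,t,y,s)`. -/
noncomputable def gaussKer (n : ℕ) (C c lam : ℝ)
    (p q : (Fin n → ℝ) × ℝ) : ℝ :=
  if 0 < p.2 - q.2 then
    C * lam ^ (-2 : ℤ) * (p.2 - q.2) ^ (-(n : ℝ) / 2) *
      Real.exp (-(p.2 - q.2) / lam ^ 2) *
      Real.exp (-c * ‖p.1 - q.1‖ ^ 2 / (p.2 - q.2))
  else 0

/-- `iterConv k m` is the `(m+1)`-fold convolution of the kernel `k` with itself
in the variables `(x,t)`. -/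
noncomputable def iterConv {n : ℕ}
    (k : (Fin n → ℝ) × ℝ → (Fin n → ℝ) × ℝ → ℝ) :
    ℕ → ((Fin n → ℝ) × ℝ → (Fin n → ℝ) × ℝ → ℝ)
  | 0 => k
  | (m + 1) => fun p q => ∫ z : (Fin n → ℝ) × ℝ, k p z * iterConv k m z q

/-!
By induction on the number of factors, the `(j + 1)`-fold convolution is bounded by
`K λ^{-2(j+1)} (t-s)^j (t-s)^{-n/2} e^{-(t-s)/λ²} e^{-γ|x-y|²/(t-s)}`, with `γ` halved at each
step. In one step, with `a = t - τ` and `b = τ - s`, the factors `e^{-a/λ²} e^{-b/λ²}` multiply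
to `e^{-(t-s)/λ²}`; the space integral of the two Gaussians is at most a constant times
`(ab/(a+b))^{n/2} e^{-(γ/2)|x-y|²/(a+b)}`, which turns `a^{-n/2} b^{-n/2}` into `(t-s)^{-n/2}`;
and `∫_s^t (τ-s)^j dτ = (t-s)^{j+1}/(j+1)`. The kernels are nonnegative, so the estimates are
carried out for lower Lebesgue integrals and no integrability has to be checked.
-/

lemma add_sq_div_add_le {a b : ℝ} (ha : 0 < a) (hb : 0 < b) (u v : ℝ) :
    (u + v) ^ 2 / (a + b) ≤ u ^ 2 / a + v ^ 2 / b := by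
  rw [div_add_div _ _ ha.ne' hb.ne', div_le_div_iff₀ (by positivity) (by positivity)]
  nlinarith [sq_nonneg (b * u - a * v), mul_pos ha hb]

lemma norm_sub_sq_div_add_le {E : Type*} [SeminormedAddCommGroup E] {a b : ℝ} (ha : 0 < a)
    (hb : 0 < b) (x y w : E) :
    ‖x - y‖ ^ 2 / (a + b) ≤ ‖x - w‖ ^ 2 / a + ‖w - y‖ ^ 2 / b := by
  calc ‖x - y‖ ^ 2 / (a + b) ≤ (‖x - w‖ + ‖w - y‖) ^ 2 / (a + b) := by
        gcongr; exact norm_sub_le_norm_sub_add_norm_sub x w y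
    _ ≤ _ := add_sq_div_add_le ha hb _ _

section PiGaussian

variable {ι : Type*} [Fintype ι]

lemma sum_sq_le_card_mul_norm_sq (u : ι → ℝ) : ∑ i, u i ^ 2 ≤ Fintype.card ι * ‖u‖ ^ 2 := by
  have h : ∀ i ∈ Finset.univ, u i ^ 2 ≤ ‖u‖ ^ 2 := fun i _ => by
    simpa [Real.norm_eq_abs, sq_abs] using pow_le_pow_left₀ (norm_nonneg _) (norm_le_pi_norm u i) 2
  have := Finset.sum_le_card_nsmul Finset.univ (fun i => u i ^ 2) _ h
  rwa [nsmul_eq_mul, Finset.card_univ] at this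

lemma lintegral_exp_neg_mul_norm_sq_le {δ : ℝ} (hδ : 0 < δ) :
    ∫⁻ u : ι → ℝ, ENNReal.ofReal (exp (-δ * ‖u‖ ^ 2)) ≤
      ENNReal.ofReal ((π * (Fintype.card ι + 1) / δ) ^ (Fintype.card ι / 2 : ℝ)) := by
  set N : ℝ := (Fintype.card ι : ℝ)
  have hN : 0 ≤ N := Nat.cast_nonneg _
  -- `N + 1` rather than `N`, so that `β > 0` also when `ι` is empty
  set β := δ / (N + 1) with hβ
  have hβpos : 0 < β := by positivity
  have hle : ∀ u : ι → ℝ, exp (-δ * ‖u‖ ^ 2) ≤ ∏ i, exp (-β * u i ^ 2) := fun u => by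
    rw [← exp_sum, exp_le_exp]
    have hβN : β * N ≤ δ := by
      rw [hβ, div_mul_eq_mul_div, div_le_iff₀ (by positivity)]
      nlinarith
    have h : β * ∑ i, u i ^ 2 ≤ δ * ‖u‖ ^ 2 :=
      calc β * ∑ i, u i ^ 2 ≤ β * (N * ‖u‖ ^ 2) := by gcongr; exact sum_sq_le_card_mul_norm_sq u
        _ ≤ δ * ‖u‖ ^ 2 := by rw [← mul_assoc]; gcongr
    simp only [neg_mul, Finset.sum_neg_distrib, ← Finset.mul_sum]
    linarith
  have hint : Integrable (fun u : ι → ℝ => ∏ i, exp (-β * u i ^ 2)) :=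
    Integrable.fintype_prod (f := fun _ t => exp (-β * t ^ 2)) fun _ =>
      integrable_exp_neg_mul_sq hβpos
  calc ∫⁻ u : ι → ℝ, ENNReal.ofReal (exp (-δ * ‖u‖ ^ 2))
      ≤ ∫⁻ u : ι → ℝ, ENNReal.ofReal (∏ i, exp (-β * u i ^ 2)) :=
        lintegral_mono fun u => ENNReal.ofReal_le_ofReal (hle u)
    _ = ENNReal.ofReal (√(π / β) ^ Fintype.card ι) := by
        rw [← ofReal_integral_eq_lintegral_ofReal hint (ae_of_all _ fun u => by positivity),
          integral_fintype_prod_volume_eq_pow (fun t => exp (-β * t ^ 2)), integral_gaussian]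
    _ = _ := by
        rw [sqrt_eq_rpow, ← rpow_natCast, ← rpow_mul (by positivity), hβ, div_div_eq_mul_div]
        congr 2
        ring

lemma lintegral_gaussian_mul_gaussian_le {c γ a b : ℝ} (hγ : 0 < γ) (hγc : γ ≤ c) (ha : 0 < a)
    (hb : 0 < b) (x y : ι → ℝ) :
    ∫⁻ w, ENNReal.ofReal (exp (-c * ‖x - w‖ ^ 2 / a) * exp (-γ * ‖w - y‖ ^ 2 / b)) ≤
      ENNReal.ofReal ((4 * π * (Fintype.card ι + 1) / γ) ^ (Fintype.card ι / 2 : ℝ) *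
        (a * b / (a + b)) ^ (Fintype.card ι / 2 : ℝ) *
        exp (-(γ / 2) * ‖x - y‖ ^ 2 / (a + b))) := by
  set m := min a b
  have hm : 0 < m := lt_min ha hb
  -- half of the Gaussian weight gives the decay in `x - y`; the other half is integrated
  -- around whichever of `x`, `y` has the smaller variance `m ≤ 2ab / (a + b)`
  obtain ⟨z, hz⟩ : ∃ z, ∀ w, ‖w - z‖ ^ 2 / m ≤ ‖x - w‖ ^ 2 / a + ‖w - y‖ ^ 2 / b := by
    rcases le_total a b with hab | hab
    · refine ⟨x, fun w => ?_⟩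
      rw [show m = a from min_eq_left hab, norm_sub_rev]
      exact le_add_of_nonneg_right (by positivity)
    · refine ⟨y, fun w => ?_⟩
      rw [show m = b from min_eq_right hab]
      exact le_add_of_nonneg_left (by positivity)
  set E := exp (-(γ / 2) * ‖x - y‖ ^ 2 / (a + b))
  have hpt : ∀ w, exp (-c * ‖x - w‖ ^ 2 / a) * exp (-γ * ‖w - y‖ ^ 2 / b) ≤
      E * exp (-(γ / (2 * m)) * ‖w - z‖ ^ 2) := fun w => by
    rw [← exp_add, ← exp_add, exp_le_exp]
    have h1 := mul_le_mul_of_nonneg_left (norm_sub_sq_div_add_le ha hb x y w)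
      (by positivity : 0 ≤ γ / 2)
    have h2 := mul_le_mul_of_nonneg_left (hz w) (by positivity : 0 ≤ γ / 2)
    have h3 : γ * (‖x - w‖ ^ 2 / a) ≤ c * (‖x - w‖ ^ 2 / a) := by gcongr
    linear_combination h1 + h2 + h3
  set N : ℝ := (Fintype.card ι : ℝ)
  have hmab : π * (N + 1) / (γ / (2 * m)) ≤ 4 * π * (N + 1) / γ * (a * b / (a + b)) := by
    have hN : 0 ≤ N := Nat.cast_nonneg _
    have : m * (a + b) ≤ 2 * (a * b) := by nlinarith [min_le_left a b, min_le_right a b]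
    rw [div_div_eq_mul_div, div_mul_div_comm, div_le_div_iff₀ hγ (by positivity)]
    nlinarith [mul_le_mul_of_nonneg_left this (by positivity : 0 ≤ 2 * π * (N + 1) * γ)]
  calc ∫⁻ w, ENNReal.ofReal (exp (-c * ‖x - w‖ ^ 2 / a) * exp (-γ * ‖w - y‖ ^ 2 / b))
      ≤ ∫⁻ w, ENNReal.ofReal E * ENNReal.ofReal (exp (-(γ / (2 * m)) * ‖w - z‖ ^ 2)) :=
        lintegral_mono fun w => by
          rw [← ENNReal.ofReal_mul (by positivity)]
          exact ENNReal.ofReal_le_ofReal (hpt w)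
    _ = ENNReal.ofReal E * ∫⁻ u, ENNReal.ofReal (exp (-(γ / (2 * m)) * ‖u‖ ^ 2)) := by
        rw [lintegral_const_mul' _ _ ENNReal.ofReal_ne_top,
          lintegral_sub_right_eq_self (fun u => ENNReal.ofReal (exp (-(γ / (2 * m)) * ‖u‖ ^ 2))) z]
    _ ≤ ENNReal.ofReal E * ENNReal.ofReal ((π * (N + 1) / (γ / (2 * m))) ^ (N / 2)) := by
        gcongr
        exact lintegral_exp_neg_mul_norm_sq_le (by positivity)
    _ ≤ _ := by
        rw [← ENNReal.ofReal_mul (by positivity), ← mul_rpow (by positivity) (by positivity),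
          mul_comm E]
        gcongr

end PiGaussian

lemma abs_integral_le_of_lintegral_le {α : Type*} [MeasurableSpace α] {μ : Measure α}
    {f g : α → ℝ} {B : ℝ} (hB : 0 ≤ B) (hfg : ∀ x, |f x| ≤ g x)
    (h : ∫⁻ x, ENNReal.ofReal (g x) ∂μ ≤ ENNReal.ofReal B) :
    |∫ x, f x ∂μ| ≤ B := by
  rw [← Real.norm_eq_abs]
  refine (norm_integral_le_lintegral_norm f).trans (ENNReal.toReal_le_of_le_ofReal hB ?_)
  refine (lintegral_mono fun x => ENNReal.ofReal_le_ofReal ?_).trans h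
  rw [Real.norm_eq_abs]
  exact hfg x

lemma lintegral_Ioo_ofReal_sub_pow {s t : ℝ} (hst : s ≤ t) (j : ℕ) :
    ∫⁻ τ in Set.Ioo s t, ENNReal.ofReal ((τ - s) ^ j) =
      ENNReal.ofReal ((t - s) ^ (j + 1) / (j + 1)) := by
  have hint : IntegrableOn (fun τ => (τ - s) ^ j) (Set.Ioo s t) :=
    (continuous_id.sub continuous_const).pow j |>.integrableOn_Icc.mono_set Set.Ioo_subset_Icc_self
  have hnn : 0 ≤ᵐ[volume.restrict (Set.Ioo s t)] fun τ => (τ - s) ^ j :=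
    (ae_restrict_iff' measurableSet_Ioo).2 <|
      ae_of_all _ fun τ hτ => pow_nonneg (sub_pos.2 hτ.1).le j
  rw [← ofReal_integral_eq_lintegral_ofReal hint hnn, ← integral_Ioc_eq_integral_Ioo,
    ← intervalIntegral.integral_of_le hst, intervalIntegral.integral_comp_sub_right (· ^ j)]
  simp [integral_pow]

/-- `gaussBound n K γ lam j` bounds the `(j + 1)`-fold convolution `iterConv _ j`: every further
convolution with `gaussKer` gains a factor `lam⁻² (t - s)`. -/
noncomputable def gaussBound (n : ℕ) (K γ lam : ℝ) (j : ℕ) (p q : (Fin n → ℝ) × ℝ) : ℝ :=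
  if 0 < p.2 - q.2 then
    K * (lam ^ 2)⁻¹ ^ (j + 1) * (p.2 - q.2) ^ j * (p.2 - q.2) ^ (-(n : ℝ) / 2) *
      exp (-(p.2 - q.2) / lam ^ 2) * exp (-γ * ‖p.1 - q.1‖ ^ 2 / (p.2 - q.2))
  else 0

section GaussBound

variable {n : ℕ} {C c K γ lam : ℝ}

lemma gaussKer_eq_gaussBound : gaussKer n C c lam = gaussBound n C c lam 0 := by
  funext p q
  simp [gaussKer, gaussBound]

lemma gaussBound_nonneg (hK : 0 ≤ K) (j : ℕ) (p q : (Fin n → ℝ) × ℝ) :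
    0 ≤ gaussBound n K γ lam j p q := by
  unfold gaussBound
  split_ifs <;> positivity

lemma gaussBound_mul_gaussBound_eq_zero {K' γ' : ℝ} (i j : ℕ) {p z q : (Fin n → ℝ) × ℝ}
    (h : ¬ (q.2 < z.2 ∧ z.2 < p.2)) :
    gaussBound n K γ lam i p z * gaussBound n K' γ' lam j z q = 0 := by
  rw [not_and_or, not_lt, not_lt] at h
  rcases h with h | h
  · exact mul_eq_zero_of_right _ (if_neg (by linarith))
  · exact mul_eq_zero_of_left (if_neg (by linarith)) _

lemma gaussBound_eq_ite (K γ lam : ℝ) (j : ℕ) (p q : (Fin n → ℝ) × ℝ) :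
    gaussBound n K γ lam j p q =
      if 0 < p.2 - q.2 then
        K * lam ^ (-(2 * ((j + 1 : ℕ) : ℤ))) *
          (p.2 - q.2) ^ (-(n : ℝ) / 2 + ((j + 1 : ℕ) : ℝ) - 1) *
          exp (-(p.2 - q.2) / lam ^ 2) * exp (-γ * ‖p.1 - q.1‖ ^ 2 / (p.2 - q.2))
      else 0 := by
  rw [gaussBound]
  split_ifs with hpq
  · have hlam : lam ^ (-(2 * ((j + 1 : ℕ) : ℤ))) = (lam ^ 2)⁻¹ ^ (j + 1) := by
      rw [zpow_neg, inv_pow, ← pow_mul, ← zpow_natCast]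
      push_cast
      rfl
    have hrpow : (p.2 - q.2) ^ (-(n : ℝ) / 2 + ((j + 1 : ℕ) : ℝ) - 1) =
        (p.2 - q.2) ^ j * (p.2 - q.2) ^ (-(n : ℝ) / 2) := by
      rw [← rpow_natCast, ← rpow_add hpq]
      push_cast
      ring_nf
    rw [hlam, hrpow]
    ring
  · rfl

lemma lintegral_gaussBound_mul_gaussBound_slice_le (hC : 0 ≤ C) (hK : 0 ≤ K) (hγ : 0 < γ)
    (hγc : γ ≤ c) (j : ℕ) (x y : Fin n → ℝ) {s τ t : ℝ} (hsτ : s < τ) (hτt : τ < t) :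
    ∫⁻ w, ENNReal.ofReal
        (gaussBound n C c lam 0 (x, t) (w, τ) * gaussBound n K γ lam j (w, τ) (y, s)) ≤
      ENNReal.ofReal (C * K * (4 * π * (n + 1) / γ) ^ ((n : ℝ) / 2) * (lam ^ 2)⁻¹ ^ (j + 2) *
        (t - s) ^ (-(n : ℝ) / 2) * exp (-(t - s) / lam ^ 2) *
        exp (-(γ / 2) * ‖x - y‖ ^ 2 / (t - s)) * (τ - s) ^ j) := by
  have ha : 0 < t - τ := sub_pos.2 hτt
  have hb : 0 < τ - s := sub_pos.2 hsτ
  have hab : (t - τ) + (τ - s) = t - s := sub_add_sub_cancel t τ s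
  set P := C * K * (lam ^ 2)⁻¹ ^ (j + 2) * (τ - s) ^ j *
      ((t - τ) ^ (-(n : ℝ) / 2) * (τ - s) ^ (-(n : ℝ) / 2)) *
      (exp (-(t - τ) / lam ^ 2) * exp (-(τ - s) / lam ^ 2)) with hPdef
  have hP : 0 ≤ P := by positivity
  have hsplit : ∀ w,
      gaussBound n C c lam 0 (x, t) (w, τ) * gaussBound n K γ lam j (w, τ) (y, s) =
        P * (exp (-c * ‖x - w‖ ^ 2 / (t - τ)) * exp (-γ * ‖w - y‖ ^ 2 / (τ - s))) := fun w => by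
    simp only [gaussBound, if_pos ha, if_pos hb, hPdef]
    ring
  have hexp :
      exp (-(t - τ) / lam ^ 2) * exp (-(τ - s) / lam ^ 2) = exp (-(t - s) / lam ^ 2) := by
    rw [← exp_add, ← hab]
    ring_nf
  have hrpow : (t - τ) ^ (-(n : ℝ) / 2) * (τ - s) ^ (-(n : ℝ) / 2) *
      ((t - τ) * (τ - s) / (t - s)) ^ ((n : ℝ) / 2) = (t - s) ^ (-(n : ℝ) / 2) := by
    rw [div_rpow (by positivity) (by linarith), mul_rpow ha.le hb.le, neg_div, rpow_neg ha.le,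
      rpow_neg hb.le, rpow_neg (by linarith)]
    field_simp
  calc ∫⁻ w, ENNReal.ofReal
        (gaussBound n C c lam 0 (x, t) (w, τ) * gaussBound n K γ lam j (w, τ) (y, s))
      = ENNReal.ofReal P * ∫⁻ w, ENNReal.ofReal
          (exp (-c * ‖x - w‖ ^ 2 / (t - τ)) * exp (-γ * ‖w - y‖ ^ 2 / (τ - s))) := by
        simp_rw [hsplit, ENNReal.ofReal_mul hP]
        exact lintegral_const_mul' _ _ ENNReal.ofReal_ne_top
    _ ≤ ENNReal.ofReal P * ENNReal.ofReal ((4 * π * (n + 1) / γ) ^ ((n : ℝ) / 2) *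
          ((t - τ) * (τ - s) / (t - s)) ^ ((n : ℝ) / 2) *
          exp (-(γ / 2) * ‖x - y‖ ^ 2 / (t - s))) := by
        gcongr
        simpa [hab] using lintegral_gaussian_mul_gaussian_le hγ hγc ha hb x y
    _ = _ := by
        rw [← ENNReal.ofReal_mul hP, ← hrpow, ← hexp, hPdef]
        congr 1
        ring

lemma lintegral_gaussBound_mul_gaussBound_le (hC : 0 ≤ C) (hK : 0 ≤ K) (hγ : 0 < γ)
    (hγc : γ ≤ c) (j : ℕ) (p q : (Fin n → ℝ) × ℝ) :
    ∫⁻ z, ENNReal.ofReal (gaussBound n C c lam 0 p z * gaussBound n K γ lam j z q) ≤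
      ENNReal.ofReal (gaussBound n (C * K * (4 * π * (n + 1) / γ) ^ ((n : ℝ) / 2) / (j + 1))
        (γ / 2) lam (j + 1) p q) := by
  obtain ⟨x, t⟩ := p
  obtain ⟨y, s⟩ := q
  by_cases hst : s < t
  swap
  · have hzero : ∀ z, gaussBound n C c lam 0 (x, t) z * gaussBound n K γ lam j z (y, s) = 0 :=
      fun z => gaussBound_mul_gaussBound_eq_zero 0 j fun h => hst (h.1.trans h.2)
    simp only [hzero, ENNReal.ofReal_zero, lintegral_zero, zero_le]
  set A := C * K * (4 * π * (n + 1) / γ) ^ ((n : ℝ) / 2) * (lam ^ 2)⁻¹ ^ (j + 2) *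
    (t - s) ^ (-(n : ℝ) / 2) * exp (-(t - s) / lam ^ 2) * exp (-(γ / 2) * ‖x - y‖ ^ 2 / (t - s))
    with hA
  have hslice : ∀ τ, ∫⁻ w, ENNReal.ofReal
      (gaussBound n C c lam 0 (x, t) (w, τ) * gaussBound n K γ lam j (w, τ) (y, s)) ≤
      (Set.Ioo s t).indicator (fun τ => ENNReal.ofReal (A * (τ - s) ^ j)) τ := fun τ => by
    by_cases hτ : τ ∈ Set.Ioo s t
    · rw [Set.indicator_of_mem hτ]
      exact lintegral_gaussBound_mul_gaussBound_slice_le hC hK hγ hγc j x y hτ.1 hτ.2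
    · have hzero : ∀ w,
          gaussBound n C c lam 0 (x, t) (w, τ) * gaussBound n K γ lam j (w, τ) (y, s) = 0 :=
        fun w => gaussBound_mul_gaussBound_eq_zero 0 j hτ
      simp only [Set.indicator_of_notMem hτ, hzero, ENNReal.ofReal_zero, lintegral_zero, le_refl]
  calc ∫⁻ z, ENNReal.ofReal (gaussBound n C c lam 0 (x, t) z * gaussBound n K γ lam j z (y, s))
      ≤ ∫⁻ τ, ∫⁻ w, ENNReal.ofReal
          (gaussBound n C c lam 0 (x, t) (w, τ) * gaussBound n K γ lam j (w, τ) (y, s)) := by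
        rw [Measure.volume_eq_prod, ← lintegral_prod_swap]
        exact lintegral_prod_le _
    _ ≤ ∫⁻ τ, (Set.Ioo s t).indicator (fun τ => ENNReal.ofReal (A * (τ - s) ^ j)) τ :=
        lintegral_mono hslice
    _ = ENNReal.ofReal A * ENNReal.ofReal ((t - s) ^ (j + 1) / (j + 1)) := by
        rw [lintegral_indicator measurableSet_Ioo, ← lintegral_Ioo_ofReal_sub_pow hst.le,
          ← lintegral_const_mul' _ _ ENNReal.ofReal_ne_top]
        simp_rw [ENNReal.ofReal_mul (by positivity : 0 ≤ A)]
    _ = _ := by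
        rw [← ENNReal.ofReal_mul (by positivity), gaussBound, if_pos (sub_pos.2 hst), hA]
        congr 1
        push_cast
        ring

end GaussBound

lemma abs_iterConv_gaussKer_le {n : ℕ} {C c : ℝ} (hC : 0 < C) (hc : 0 < c) (j : ℕ) :
    ∃ K γ : ℝ, 0 < K ∧ 0 < γ ∧ γ ≤ c ∧ ∀ lam : ℝ, ∀ p q : (Fin n → ℝ) × ℝ,
      |iterConv (gaussKer n C c lam) j p q| ≤ gaussBound n K γ lam j p q := by
  induction j with
  | zero =>
    refine ⟨C, c, hC, hc, le_rfl, fun lam p q => ?_⟩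
    rw [iterConv, gaussKer_eq_gaussBound, abs_of_nonneg (gaussBound_nonneg hC.le 0 p q)]
  | succ j ih =>
    obtain ⟨K, γ, hK, hγ, hγc, hbound⟩ := ih
    refine ⟨C * K * (4 * π * (n + 1) / γ) ^ ((n : ℝ) / 2) / (j + 1), γ / 2, by positivity,
      by positivity, by linarith, fun lam p q => ?_⟩
    refine abs_integral_le_of_lintegral_le (gaussBound_nonneg (by positivity) _ p q)
      (fun z => ?_) (lintegral_gaussBound_mul_gaussBound_le hC.le hK.le hγ hγc j p q)
    have hk : gaussKer n C c lam p z = gaussBound n C c lam 0 p z := by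
      rw [gaussKer_eq_gaussBound]
    rw [abs_mul, hk, abs_of_nonneg (gaussBound_nonneg hC.le 0 p z)]
    exact mul_le_mul_of_nonneg_left (hbound lam z q) (gaussBound_nonneg hC.le 0 p z)

theorem stmt4_general (n : ℕ) (C c : ℝ) (hC : 0 < C) (hc : 0 < c)
    (m : ℕ) (hm : 1 ≤ m) :
    ∃ C' c' : ℝ, 0 < C' ∧ 0 < c' ∧
      ∀ lam : ℝ, 0 < lam → ∀ p q : (Fin n → ℝ) × ℝ,
        iterConv (gaussKer n C c lam) (m - 1) p q ≤
          (if 0 < p.2 - q.2 then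
            C' * lam ^ (-(2 * m : ℤ)) * (p.2 - q.2) ^ (-(n : ℝ) / 2 + m - 1) *
              Real.exp (-(p.2 - q.2) / lam ^ 2) *
              Real.exp (-c' * ‖p.1 - q.1‖ ^ 2 / (p.2 - q.2))
          else 0) := by
  obtain ⟨K, γ, hK, hγ, -, hbound⟩ := abs_iterConv_gaussKer_le (n := n) hC hc (m - 1)
  obtain ⟨j, rfl⟩ : ∃ j, m = j + 1 := ⟨m - 1, by omega⟩
  rw [add_tsub_cancel_right] at hbound ⊢
  exact ⟨K, γ, hK, hγ, fun lam _ p q =>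
    (le_abs_self _).trans ((hbound lam p q).trans_eq (gaussBound_eq_ite K γ lam j p q))⟩

/-- the `m`-fold self-convolution of the Gaussian kernel bound
satisfies the corresponding bound with an extra factor `(t-s)^{m-1}` and
constants depending only on `n, m, C, c`. -/
theorem stmt4 (n : ℕ) (hn : 1 ≤ n) (C c : ℝ) (hC : 0 < C) (hc : 0 < c)
    (m : ℕ) (hm : 1 ≤ m) :
    ∃ C' c' : ℝ, 0 < C' ∧ 0 < c' ∧
      ∀ lam : ℝ, 0 < lam → ∀ p q : (Fin n → ℝ) × ℝ,
        iterConv (gaussKer n C c lam) (m - 1) p q ≤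
          (if 0 < p.2 - q.2 then
            C' * lam ^ (-(2 * m : ℤ)) * (p.2 - q.2) ^ (-(n : ℝ) / 2 + m - 1) *
              Real.exp (-(p.2 - q.2) / lam ^ 2) *
              Real.exp (-c' * ‖p.1 - q.1‖ ^ 2 / (p.2 - q.2))
          else 0) :=
  stmt4_general n C c hC hc m hm
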